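/- arXiv:2401.13391 — 6 statements merged into one kernel-verified Lean document; each statement's English description precedes it below -/
import Mathlib

section
/- Let (X, 𝒜) be a measurable space, A = {0,1} a binary sensitive attribute, and μ a probability measure on X × A giving positive mass to each group X × {a}. Let p, S : X × A → [0,1] be measurable, and for each a ∈ A let μ_a denote the restriction of μ to X × {a}; assume that for each a ∈ A the pushforward measures of p and of S under μ_a are atomless. Then the Affirmative Action assumption holds if and only if for each group a ∈ A, for (μ_a ⊗ μ_a)-almost every pair ((x,a),(x',a)) of individuals of group a, p(x,a) ≤ p(x',a) implies S(x,a) ≤ S(x',a). -/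
/-!
Inside one group, comonotonicity lets every fair decision `{t < p}` be matched by a score
decision `{u < S}`: since `S` is atomless, `u ↦ μ_a {u < S}` is continuous, so by the
intermediate value theorem some `u` gives `{u < S}` the same mass as `{t < p}`, and two such sets
of equal mass differ by a null set because `({u < S} \ {t < p}) × ({t < p} \ {u < S})` consists
of discordant pairs. Conversely, a discordant pair with `p x < p x'` is separated by rationals
`t, s` into the box `{p < t, s < S} × {t < p, S < s}`, which a score threshold matching `t`
makes null; the discordant pairs with `p x = p x'` are null because `p` is atomless.
-/

open MeasureTheory Set Filter Topology
open scoped ENNReal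

section Quantile

variable (ν : Measure ℝ) [IsFiniteMeasure ν] [NullSingletonClass ν]

theorem continuous_measure_Ioi : Continuous fun u => ν (Ioi u) := by
  refine continuous_iff_continuousAt.2 fun x => ?_
  set ε : ℝ → ℝ≥0∞ := fun y => ν (Icc (x - |y - x|) (x + |y - x|))
  have hε : Tendsto ε (𝓝 x) (𝓝 0) := by
    refine (tendsto_measure_Icc ν x).comp ?_
    simpa using ((continuous_id.sub continuous_const).abs.tendsto x : Tendsto _ _ (𝓝 |x - x|))
  have hle (y : ℝ) : ν (Ioi x) ≤ ν (Ioi y) + ε y := by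
    refine (measure_mono fun w (hw : x < w) => ?_).trans (measure_union_le _ _)
    by_cases hwy : y < w
    · exact Or.inl hwy
    · exact Or.inr ⟨by linarith [le_abs_self (y - x)], by linarith [le_abs_self (y - x)]⟩
  have hge (y : ℝ) : ν (Ioi y) ≤ ν (Ioi x) + ε y := by
    refine (measure_mono fun w (hw : y < w) => ?_).trans (measure_union_le _ _)
    by_cases hxw : x < w
    · exact Or.inl hxw
    · exact Or.inr ⟨by linarith [neg_abs_le (y - x)], by linarith [abs_nonneg (y - x)]⟩
  refine tendsto_of_tendsto_of_tendsto_of_le_of_le (g := fun y => ν (Ioi x) - ε y)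
    (h := fun y => ν (Ioi x) + ε y) ?_ ?_ (fun y => tsub_le_iff_right.2 (hle y)) hge
  · simpa using ENNReal.Tendsto.sub tendsto_const_nhds hε (Or.inl (measure_ne_top ν _))
  · simpa using (tendsto_const_nhds (x := ν (Ioi x))).add hε

theorem exists_mem_Icc_measure_Ioi_eq {a b : ℝ} (hab : a ≤ b) {m : ℝ≥0∞}
    (ha : m ≤ ν (Ici a)) (hb : ν (Ioi b) ≤ m) : ∃ u ∈ Icc a b, ν (Ioi u) = m := by
  rw [← measure_congr Ioi_ae_eq_Ici] at ha
  exact intermediate_value_Icc' hab (continuous_measure_Ioi ν).continuousOn ⟨hb, ha⟩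

end Quantile

section Comonotone

variable {Ω : Type*} [MeasurableSpace Ω] {ν : Measure Ω} {p S : Ω → ℝ}

theorem ae_lt_iff_lt_of_measure_eq [IsFiniteMeasure ν] (hp : Measurable p) (hS : Measurable S)
    (hmono : ∀ᵐ q ∂ν.prod ν, p q.1 ≤ p q.2 → S q.1 ≤ S q.2) {t u : ℝ}
    (h : ν {z | t < p z} = ν {z | u < S z}) : ∀ᵐ z ∂ν, (t < p z ↔ u < S z) := by
  set A := {z | t < p z}
  set B := {z | u < S z}
  have hdiff : ν (A \ B) = ν (B \ A) :=
    measure_sdiff_symm (measurableSet_lt measurable_const hp).nullMeasurableSet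
      (measurableSet_lt measurable_const hS).nullMeasurableSet h (measure_ne_top ν _)
  have hdiscordant : ν (B \ A) * ν (A \ B) = 0 := by
    rw [← Measure.prod_prod]
    refine measure_mono_null ?_ (ae_iff.1 hmono)
    rintro ⟨z₁, z₂⟩ ⟨⟨hB₁, hA₁⟩, hA₂, hB₂⟩
    simp only [A, B, mem_ofPred_eq, not_lt] at hA₁ hA₂ hB₁ hB₂ ⊢
    exact fun hS₁₂ => by linarith [hS₁₂ (by linarith)]
  rw [← hdiff, mul_self_eq_zero] at hdiscordant
  exact eventuallyEq_set.1 (ae_eq_set.2 ⟨hdiscordant, hdiff ▸ hdiscordant⟩)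

theorem exists_mem_Icc_ae_lt_iff_lt [IsFiniteMeasure ν] (hp : Measurable p) (hS : Measurable S)
    [NullSingletonClass (ν.map S)] {a b : ℝ} (hab : a ≤ b) (hSab : ∀ z, S z ∈ Icc a b)
    (hmono : ∀ᵐ q ∂ν.prod ν, p q.1 ≤ p q.2 → S q.1 ≤ S q.2) (t : ℝ) :
    ∃ u ∈ Icc a b, ∀ᵐ z ∂ν, (t < p z ↔ u < S z) := by
  have hmap (I : Set ℝ) (hI : MeasurableSet I) : ν.map S I = ν (S ⁻¹' I) :=
    Measure.map_apply hS hI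
  have hSb : S ⁻¹' Ioi b = ∅ := eq_empty_of_forall_notMem fun z hz => not_lt.2 (hSab z).2 hz
  obtain ⟨u, hu, hum⟩ := exists_mem_Icc_measure_Ioi_eq (ν.map S) hab (m := ν {z | t < p z})
    (by rw [hmap _ measurableSet_Ici]; exact measure_mono fun z _ => (hSab z).1)
    (by simp [hmap _ measurableSet_Ioi, hSb])
  refine ⟨u, hu, ae_lt_iff_lt_of_measure_eq hp hS hmono ?_⟩
  rw [← hum, hmap _ measurableSet_Ioi]
  rfl

theorem measure_prod_setOf_apply_eq_apply_eq_zero [SFinite ν] (hp : Measurable p)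
    [NullSingletonClass (ν.map p)] : ν.prod ν {q | p q.1 = p q.2} = 0 := by
  have hdiag : MeasurableSet {q : Ω × Ω | p q.1 = p q.2} :=
    measurableSet_eq_fun (hp.comp measurable_fst) (hp.comp measurable_snd)
  rw [Measure.prod_apply hdiag]
  have hfiber (x : Ω) : ν (Prod.mk x ⁻¹' {q | p q.1 = p q.2}) = ν.map p {p x} := by
    rw [Measure.map_apply hp (measurableSet_singleton _)]
    congr 1
    ext y
    simp [eq_comm]
  simp only [hfiber, measure_singleton, lintegral_zero]

theorem measure_prod_discordant_box_eq_zero [SFinite ν] {t u : ℝ}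
    (h : ∀ᵐ z ∂ν, (t < p z ↔ u < S z)) (s : ℝ) :
    ν.prod ν ({z | p z < t ∧ s < S z} ×ˢ {z | t < p z ∧ S z < s}) = 0 := by
  rw [Measure.prod_prod, mul_eq_zero]
  by_contra! hne
  obtain ⟨z₁, ⟨hp₁, hs₁⟩, hz₁⟩ :=
    Measure.exists_mem_of_measure_ne_zero_of_ae hne.1 (ae_restrict_of_ae h)
  obtain ⟨z₂, ⟨hp₂, hs₂⟩, hz₂⟩ :=
    Measure.exists_mem_of_measure_ne_zero_of_ae hne.2 (ae_restrict_of_ae h)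
  have hS₁ : S z₁ ≤ u := not_lt.1 fun h₁ => hp₁.not_gt (hz₁.2 h₁)
  linarith [hz₂.1 hp₂]

theorem ae_comonotone_of_forall_exists_ae_lt_iff_lt [SFinite ν] (hp : Measurable p)
    [NullSingletonClass (ν.map p)] {I : Set ℝ} [I.OrdConnected] (hpI : ∀ z, p z ∈ I)
    (h : ∀ t ∈ I, ∃ u, ∀ᵐ z ∂ν, (t < p z ↔ u < S z)) :
    ∀ᵐ q ∂ν.prod ν, p q.1 ≤ p q.2 → S q.1 ≤ S q.2 := by
  have hnull : ν.prod ν ({q | p q.1 = p q.2} ∪ ⋃ (t : ℚ) (_ : (t : ℝ) ∈ I) (s : ℚ),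
      {z | p z < t ∧ s < S z} ×ˢ {z | t < p z ∧ S z < s}) = 0 :=
    measure_union_null (measure_prod_setOf_apply_eq_apply_eq_zero hp) <|
      measure_iUnion_null fun t => measure_iUnion_null fun ht => measure_iUnion_null fun s =>
        (h t ht).elim fun _ hu => measure_prod_discordant_box_eq_zero hu s
  refine ae_iff.2 (measure_mono_null ?_ hnull)
  rintro ⟨z₁, z₂⟩ hq
  simp only [mem_ofPred_eq, Classical.not_imp, not_le] at hq
  obtain ⟨hple, hSlt⟩ := hq
  rcases hple.eq_or_lt with heq | hlt
  · exact Or.inl heq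
  obtain ⟨t, ht₁, ht₂⟩ := exists_rat_btwn hlt
  obtain ⟨s, hs₁, hs₂⟩ := exists_rat_btwn hSlt
  exact Or.inr (mem_iUnion₂.2 ⟨t, OrdConnected.out' (hpI z₁) (hpI z₂) ⟨ht₁.le, ht₂.le⟩,
    mem_iUnion.2 ⟨s, ⟨ht₁, hs₂⟩, ht₂, hs₁⟩⟩)

theorem ae_iff_forall_ae_restrict_fiber {ι : Type*} [Countable ι] (f : Ω → ι) {P : Ω → Prop} :
    (∀ᵐ z ∂ν, P z) ↔ ∀ i, ∀ᵐ z ∂ν.restrict {z | f z = i}, P z := by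
  rw [← ae_restrict_iUnion_iff, iUnion_eq_univ_iff.2 fun z => ⟨f z, rfl⟩, Measure.restrict_univ]

theorem groupwise_threshold_ae_eq_iff {ι : Type*} [Countable ι] [MeasurableSpace ι]
    [MeasurableSingletonClass ι] {g : Ω → ι} (hg : Measurable g) (t : ℝ) (t' : ι → ℝ) :
    (fun z => if t < p z then (1 : ℝ) else 0) =ᵐ[ν] (fun z => if t' (g z) < S z then 1 else 0) ↔
      ∀ i, ∀ᵐ z ∂ν.restrict {z | g z = i}, (t < p z ↔ t' i < S z) := by
  rw [EventuallyEq, ae_iff_forall_ae_restrict_fiber g]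
  refine forall_congr' fun i => eventually_congr ?_
  filter_upwards [ae_restrict_mem (hg (measurableSet_singleton i))] with z (hz : g z = i)
  rw [hz]
  by_cases hpz : t < p z <;> by_cases hSz : t' i < S z <;> simp [hpz, hSz]

end Comonotone

theorem affirmative_action_iff_groupwise_comonotone_general
    {X : Type*} [MeasurableSpace X]
    (μ : Measure (X × Fin 2)) [IsProbabilityMeasure μ]
    (p S : X × Fin 2 → ℝ) (hp : Measurable p) (hS : Measurable S)
    (hp01 : ∀ z, p z ∈ Set.Icc (0 : ℝ) 1) (hS01 : ∀ z, S z ∈ Set.Icc (0 : ℝ) 1)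
    (hpAtomless : ∀ a : Fin 2, ∀ c : ℝ, (μ.restrict {z | z.2 = a}).map p {c} = 0)
    (hSAtomless : ∀ a : Fin 2, ∀ c : ℝ, (μ.restrict {z | z.2 = a}).map S {c} = 0) :
    (∀ t ∈ Set.Icc (0 : ℝ) 1, ∃ t' : Fin 2 → ℝ,
        (∀ a : Fin 2, t' a ∈ Set.Icc (0 : ℝ) 1) ∧
        (fun z => if t < p z then (1 : ℝ) else 0) =ᵐ[μ]
          (fun z => if t' z.2 < S z then (1 : ℝ) else 0)) ↔
    (∀ a : Fin 2,
        ∀ᵐ q ∂((μ.restrict {z | z.2 = a}).prod (μ.restrict {z | z.2 = a})),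
          p q.1 ≤ p q.2 → S q.1 ≤ S q.2) := by
  simp only [groupwise_threshold_ae_eq_iff measurable_snd]
  constructor
  · intro hAA a
    have : NullSingletonClass ((μ.restrict {z | z.2 = a}).map p) := ⟨hpAtomless a⟩
    refine ae_comonotone_of_forall_exists_ae_lt_iff_lt hp hp01 fun t ht => ?_
    obtain ⟨t', -, ht'⟩ := hAA t ht
    exact ⟨t' a, ht' a⟩
  · intro hmono t _
    have hu (a : Fin 2) : ∃ u ∈ Set.Icc (0 : ℝ) 1,
        ∀ᵐ z ∂μ.restrict {z | z.2 = a}, (t < p z ↔ u < S z) :=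
      have : NullSingletonClass ((μ.restrict {z | z.2 = a}).map S) := ⟨hSAtomless a⟩
      exists_mem_Icc_ae_lt_iff_lt hp hS zero_le_one hS01 (hmono a) t
    choose u hu01 hu using hu
    exact ⟨u, hu01, hu⟩

/-- Theorem 3.7 of the paper, two-group form.
`p` is the fair probability, `S` the biased score, on `X × A` with `A = Fin 2`
a binary sensitive attribute.  The Affirmative Action assumption (every fair
threshold decision agrees `μ`-a.e. with a group-wise threshold decision on `S`)
holds if and only if, within each group `a`, for `(μ_a ⊗ μ_a)`-almost every pair
of individuals, `p`-order implies `S`-order. -/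
theorem affirmative_action_iff_groupwise_comonotone
    {X : Type*} [MeasurableSpace X]
    (μ : Measure (X × Fin 2)) [IsProbabilityMeasure μ]
    (p S : X × Fin 2 → ℝ) (hp : Measurable p) (hS : Measurable S)
    (hp01 : ∀ z, p z ∈ Set.Icc (0 : ℝ) 1) (hS01 : ∀ z, S z ∈ Set.Icc (0 : ℝ) 1)
    (hpos : ∀ a : Fin 2, 0 < μ {z | z.2 = a})
    (hpAtomless : ∀ a : Fin 2, ∀ c : ℝ, (μ.restrict {z | z.2 = a}).map p {c} = 0)
    (hSAtomless : ∀ a : Fin 2, ∀ c : ℝ, (μ.restrict {z | z.2 = a}).map S {c} = 0) :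
    (∀ t ∈ Set.Icc (0 : ℝ) 1, ∃ t' : Fin 2 → ℝ,
        (∀ a : Fin 2, t' a ∈ Set.Icc (0 : ℝ) 1) ∧
        (fun z => if t < p z then (1 : ℝ) else 0) =ᵐ[μ]
          (fun z => if t' z.2 < S z then (1 : ℝ) else 0)) ↔
    (∀ a : Fin 2,
        ∀ᵐ q ∂((μ.restrict {z | z.2 = a}).prod (μ.restrict {z | z.2 = a})),
          p q.1 ≤ p q.2 → S q.1 ≤ S q.2) :=
  affirmative_action_iff_groupwise_comonotone_general μ p S hp hS hp01 hS01 hpAtomless hSAtomless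
end

section
/- Assume the pushforward measures of both f and g are atomless. Then the following are equivalent: (i) for every t ∈ [0,1] there exists t' ∈ [0,1] such that the threshold-t decision on f and the threshold-t' decision on g agree μ-almost everywhere; (ii) for μ⊗μ-almost every pair (x,x') ∈ X × X, f(x) ≤ f(x') implies g(x) ≤ g(x'). -/
/-!
If the decisions agree a.e. for every threshold, then for a.e. pair with `f x < f x'` a rational
threshold separating `f x` from `f x'` also separates `g x` from `g x'` in the same direction; the
pairs with `f x = f x'` are negligible because the law of `f` has no atoms. Conversely, continuity
of the distribution function of `g` gives `t'` with `μ {t < f} = μ {t' < g}`; the sets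
`A = {t < f}` and `B = {t' < g}` then satisfy `μ (A \ B) = μ (B \ A)`, while a.e. comonotonicity
makes `(B \ A) × (A \ B)` null, so both differences are null.
-/

open MeasureTheory ProbabilityTheory Set Filter

lemma ite_one_zero_ae_eq_iff {X M : Type*} [MeasurableSpace X] [Zero M] [One M] [NeZero (1 : M)]
    {μ : Measure X} {p q : X → Prop} [DecidablePred p] [DecidablePred q] :
    ((fun x => if p x then (1 : M) else 0) =ᵐ[μ] fun x => if q x then 1 else 0) ↔
      ∀ᵐ x ∂μ, (p x ↔ q x) := by
  refine eventually_congr (Eventually.of_forall fun x => ?_)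
  by_cases hp : p x <;> by_cases hq : q x <;> simp [hp, hq]

lemma ae_eq_set_of_measure_eq_of_prod_null {X : Type*} [MeasurableSpace X] {μ : Measure X}
    [IsFiniteMeasure μ] {A B : Set X} (hA : NullMeasurableSet A μ) (hB : NullMeasurableSet B μ)
    (hAB : μ A = μ B) (h : μ.prod μ ((B \ A) ×ˢ (A \ B)) = 0) : A =ᵐ[μ] B := by
  have hdiff : μ (A \ B) = μ (B \ A) := measure_sdiff_symm hA hB hAB (measure_ne_top μ _)
  rw [Measure.prod_prod, ← hdiff, mul_self_eq_zero] at h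
  exact ae_eq_set.2 ⟨h, hdiff ▸ h⟩

lemma ae_prod_ne_of_nullSingletonClass_map {X Y α : Type*} [MeasurableSpace X]
    [MeasurableSpace Y] [MeasurableSpace α] [MeasurableEq α]
    (μ : Measure X) (ν : Measure Y) [SFinite ν] {f : X → α} {g : Y → α} (hf : Measurable f)
    (hg : Measurable g) [NullSingletonClass (ν.map g)] :
    ∀ᵐ q ∂μ.prod ν, f q.1 ≠ g q.2 := by
  refine (Measure.ae_prod_iff_ae_ae
    (measurableSet_eq_fun (hf.comp measurable_fst) (hg.comp measurable_snd)).compl).2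
    (ae_of_all _ fun x => ae_iff.2 ?_)
  have h := measure_singleton (μ := ν.map g) (f x)
  rw [Measure.map_apply hg (measurableSet_singleton _)] at h
  convert h using 2
  ext y
  simp [eq_comm]

lemma continuous_cdf (ν : Measure ℝ) [IsProbabilityMeasure ν] [NullSingletonClass ν] :
    Continuous (cdf ν) := by
  refine continuous_iff_continuousAt.2 fun x => ?_
  rw [(cdf ν).mono.continuousAt_iff_leftLim_eq_rightLim, StieltjesFunction.rightLim_eq]
  have h := (cdf ν).measure_singleton x
  rw [measure_cdf, measure_singleton, eq_comm, ENNReal.ofReal_eq_zero, sub_nonpos] at h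
  exact le_antisymm ((cdf ν).mono.leftLim_le le_rfl) h

lemma surjOn_cdf_Icc (ν : Measure ℝ) [IsProbabilityMeasure ν] [NullSingletonClass ν] {a b : ℝ}
    (hab : a ≤ b) (ha : ν (Iio a) = 0) (hb : ν (Iic b) = 1) : SurjOn (cdf ν) (Icc a b) (Icc 0 1) := by
  have hνa : cdf ν a = 0 := by
    rw [cdf_eq_real, measureReal_def, ← measure_congr Iio_ae_eq_Iic, ha, ENNReal.toReal_zero]
  have hνb : cdf ν b = 1 := by rw [cdf_eq_real, measureReal_def, hb, ENNReal.toReal_one]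
  simpa [SurjOn, hνa, hνb] using intermediate_value_Icc hab (continuous_cdf ν).continuousOn

lemma exists_mem_Icc_measure_lt_eq {X : Type*} [MeasurableSpace X] (μ : Measure X)
    [IsProbabilityMeasure μ] {f g : X → ℝ} (hf : Measurable f) (hg : Measurable g)
    (hg01 : ∀ x, g x ∈ Icc (0 : ℝ) 1) [NullSingletonClass (μ.map g)] (t : ℝ) :
    ∃ t' ∈ Icc (0 : ℝ) 1, μ {x | t < f x} = μ {x | t' < g x} := by
  have := Measure.isProbabilityMeasure_map (μ := μ) hf.aemeasurable
  have := Measure.isProbabilityMeasure_map (μ := μ) hg.aemeasurable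
  have h0 : μ.map g (Iio 0) = 0 := by
    rw [Measure.map_apply hg measurableSet_Iio]
    exact measure_mono_null (fun x hx => not_lt.2 (hg01 x).1 hx) measure_empty
  have h1 : μ.map g (Iic 1) = 1 := by
    rw [Measure.map_apply hg measurableSet_Iic, eq_univ_of_forall (s := g ⁻¹' Iic 1)
      fun x => (hg01 x).2, measure_univ]
  obtain ⟨t', ht', hcdf⟩ := surjOn_cdf_Icc (μ.map g) zero_le_one h0 h1
    ⟨cdf_nonneg (μ.map f) t, cdf_le_one (μ.map f) t⟩
  refine ⟨t', ht', ?_⟩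
  have hIic : μ.map f (Iic t) = μ.map g (Iic t') := by rw [← ofReal_cdf, ← ofReal_cdf, hcdf]
  have hIoi : μ.map f (Ioi t) = μ.map g (Ioi t') := by
    rw [← compl_Iic, ← compl_Iic, prob_compl_eq_one_sub measurableSet_Iic, prob_compl_eq_one_sub
      measurableSet_Iic, hIic]
  rwa [Measure.map_apply hf measurableSet_Ioi, Measure.map_apply hg measurableSet_Ioi] at hIoi

section Comonotone

variable {X : Type*} [MeasurableSpace X] (μ : Measure X) {f g : X → ℝ}

lemma ae_prod_le_of_ae_lt_iff_lt [SFinite μ] {t t' : ℝ} (h : ∀ᵐ x ∂μ, (t < f x ↔ t' < g x)) :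
    ∀ᵐ q ∂μ.prod μ, f q.1 ≤ t → t < f q.2 → g q.1 ≤ g q.2 := by
  filter_upwards [Measure.quasiMeasurePreserving_fst.ae h,
    Measure.quasiMeasurePreserving_snd.ae h] with q h1 h2 hq1 hq2
  exact (not_lt.1 fun hg1 => (h1.2 hg1).not_ge hq1).trans (h2.1 hq2).le

lemma ae_comonotone_of_forall_ae_lt_iff_lt [SFinite μ] (hf : Measurable f)
    [NullSingletonClass (μ.map f)] (hf01 : ∀ x, f x ∈ Icc (0 : ℝ) 1)
    (h : ∀ t ∈ Icc (0 : ℝ) 1, ∃ t' : ℝ, ∀ᵐ x ∂μ, (t < f x ↔ t' < g x)) :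
    ∀ᵐ q ∂μ.prod μ, f q.1 ≤ f q.2 → g q.1 ≤ g q.2 := by
  have hrat : ∀ r : ℚ, ∀ᵐ q ∂μ.prod μ, f q.1 ≤ r → r < f q.2 → g q.1 ≤ g q.2 := by
    intro r
    by_cases hr : (r : ℝ) ∈ Icc (0 : ℝ) 1
    · obtain ⟨t', ht'⟩ := h r hr
      exact ae_prod_le_of_ae_lt_iff_lt μ ht'
    · exact ae_of_all _ fun q h1 h2 => absurd ⟨(hf01 _).1.trans h1, h2.le.trans (hf01 _).2⟩ hr
  filter_upwards [ae_all_iff.2 hrat, ae_prod_ne_of_nullSingletonClass_map μ μ hf hf]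
    with q hq hne hle
  obtain ⟨r, hr1, hr2⟩ := exists_rat_btwn (hle.lt_of_ne hne)
  exact hq r hr1.le hr2

lemma ae_lt_iff_lt_of_ae_comonotone [IsFiniteMeasure μ] (hf : Measurable f) (hg : Measurable g)
    {t t' : ℝ} (hμ : μ {x | t < f x} = μ {x | t' < g x})
    (h : ∀ᵐ q ∂μ.prod μ, f q.1 ≤ f q.2 → g q.1 ≤ g q.2) :
    ∀ᵐ x ∂μ, (t < f x ↔ t' < g x) := by
  have hsub : ({x | t' < g x} \ {x | t < f x}) ×ˢ ({x | t < f x} \ {x | t' < g x}) ⊆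
      {q | ¬(f q.1 ≤ f q.2 → g q.1 ≤ g q.2)} := by
    rintro ⟨x, y⟩ ⟨⟨hgx, hfx⟩, hfy, hgy⟩ hq
    simp only [mem_ofPred_eq, not_lt] at hgx hfx hfy hgy
    exact (hq (hfx.trans hfy.le)).not_gt (hgy.trans_lt hgx)
  exact eventuallyEq_set.1 <| ae_eq_set_of_measure_eq_of_prod_null
    (measurableSet_lt measurable_const hf).nullMeasurableSet
    (measurableSet_lt measurable_const hg).nullMeasurableSet hμ
    (measure_mono_null hsub (ae_iff.1 h))

end Comonotone

/-- single-group form of Theorem 3.7.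
With atomless pushforwards of `f` (fair probability) and `g` (biased score),
every threshold decision on `f` agrees `μ`-a.e. with some threshold decision
on `g` if and only if, for `μ⊗μ`-almost every pair, `f`-order implies `g`-order. -/
theorem threshold_decisions_agree_iff_ae_comonotone
    {X : Type*} [MeasurableSpace X] (μ : Measure X) [IsProbabilityMeasure μ]
    (f g : X → ℝ) (hf : Measurable f) (hg : Measurable g)
    (hf01 : ∀ x, f x ∈ Set.Icc (0 : ℝ) 1) (hg01 : ∀ x, g x ∈ Set.Icc (0 : ℝ) 1)
    (hfAtomless : ∀ c : ℝ, μ.map f {c} = 0) (hgAtomless : ∀ c : ℝ, μ.map g {c} = 0) :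
    (∀ t ∈ Set.Icc (0 : ℝ) 1, ∃ t' ∈ Set.Icc (0 : ℝ) 1,
        (fun x => if t < f x then (1 : ℝ) else 0) =ᵐ[μ]
          (fun x => if t' < g x then (1 : ℝ) else 0)) ↔
    (∀ᵐ q ∂(μ.prod μ), f q.1 ≤ f q.2 → g q.1 ≤ g q.2) := by
  have : NullSingletonClass (μ.map f) := ⟨hfAtomless⟩
  have : NullSingletonClass (μ.map g) := ⟨hgAtomless⟩
  simp only [ite_one_zero_ae_eq_iff]
  refine ⟨fun h => ae_comonotone_of_forall_ae_lt_iff_lt μ hf hf01 fun t ht => ?_, fun h t _ => ?_⟩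
  · obtain ⟨t', -, ht'⟩ := h t ht
    exact ⟨t', ht'⟩
  · obtain ⟨t', ht', hμ⟩ := exists_mem_Icc_measure_lt_eq μ hf hg hg01 t
    exact ⟨t', ht', ae_lt_iff_lt_of_ae_comonotone μ hf hg hμ h⟩
end

section
/- Assume the pushforward measure of f is atomless. Suppose there exist measurable sets U, U' ⊆ X with μ(U) > 0 and μ(U') > 0 such that for all x ∈ U and all x' ∈ U', f(x) ≤ f(x') and g(x) > g(x'). Let t ∈ [0,1] satisfy f(x) ≤ t for all x ∈ U and t ≤ f(x') for all x' ∈ U'. Then for every t' ∈ [0,1], the threshold-t decision on f does not agree μ-almost everywhere with the threshold-t' decision on g. -/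
open MeasureTheory

/-! If both decisions agree a.e., pick `x ∈ U` and `x' ∈ U'` where they agree and where `f x' ≠ t`
(possible since `f` has no atom at `t`). On `U` the `f`-decision is `0`, so `g x ≤ t'`; on `U'`
it is `1`, so `t' < g x'`. This contradicts `g x' < g x`. -/

theorem ae_ne_of_map_singleton_eq_zero {X : Type*} [MeasurableSpace X] {μ : Measure X}
    {f : X → ℝ} (hf : AEMeasurable f μ) {c : ℝ} (hc : μ.map f {c} = 0) :
    ∀ᵐ x ∂μ, f x ≠ c := by
  rw [Measure.map_apply_of_aemeasurable hf (measurableSet_singleton c),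
    measure_eq_zero_iff_ae_notMem] at hc
  exact hc

theorem ite_one_zero_eq_ite_one_zero_iff {p q : Prop} [Decidable p] [Decidable q] :
    ((if p then (1 : ℝ) else 0) = if q then 1 else 0) ↔ (p ↔ q) := by
  split_ifs <;> simp_all

theorem threshold_decision_not_realizable_general
    {X : Type*} [MeasurableSpace X] (μ : Measure X)
    (f g : X → ℝ) (hf : Measurable f)
    (hfAtomless : ∀ c : ℝ, μ.map f {c} = 0)
    (U U' : Set X)
    (hUpos : 0 < μ U) (hU'pos : 0 < μ U')
    (hUU' : ∀ x ∈ U, ∀ x' ∈ U', f x ≤ f x' ∧ g x' < g x)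
    (t : ℝ)
    (htU : ∀ x ∈ U, f x ≤ t) (htU' : ∀ x' ∈ U', t ≤ f x') :
    ∀ t' ∈ Set.Icc (0 : ℝ) 1,
      ¬ ((fun x => if t < f x then (1 : ℝ) else 0) =ᵐ[μ]
          (fun x => if t' < g x then (1 : ℝ) else 0)) := by
  intro t' _ h
  have hdecide : ∀ᵐ x ∂μ, (t < f x ↔ t' < g x) :=
    h.mono fun x hx => ite_one_zero_eq_ite_one_zero_iff.1 hx
  have hft : ∀ᵐ x ∂μ, f x ≠ t := ae_ne_of_map_singleton_eq_zero hf.aemeasurable (hfAtomless t)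
  obtain ⟨x, hxU, hx⟩ :=
    Measure.exists_mem_of_measure_ne_zero_of_ae hUpos.ne' (ae_restrict_of_ae hdecide)
  obtain ⟨x', hx'U', hx', hfx't⟩ :=
    Measure.exists_mem_of_measure_ne_zero_of_ae hU'pos.ne' (ae_restrict_of_ae (hdecide.and hft))
  have hgx : g x ≤ t' := not_lt.1 fun hlt => (htU x hxU).not_gt (hx.2 hlt)
  have hgx' : t' < g x' := hx'.1 ((htU' x' hx'U').lt_of_ne' hfx't)
  linarith [(hUU' x hxU x' hx'U').2]

/-- forward direction of Theorem 3.7, as in its proof.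
If positive-measure sets `U`, `U'` witness a violation of comonotonicity of
`f` and `g` (`f` is at most `t` on `U` and at least `t` on `U'`, while `g` is
strictly larger on `U` than on `U'`), then the threshold-`t` decision on `f`
cannot agree `μ`-a.e. with any threshold decision on `g`. -/
theorem threshold_decision_not_realizable
    {X : Type*} [MeasurableSpace X] (μ : Measure X) [IsProbabilityMeasure μ]
    (f g : X → ℝ) (hf : Measurable f) (hg : Measurable g)
    (hf01 : ∀ x, f x ∈ Set.Icc (0 : ℝ) 1) (hg01 : ∀ x, g x ∈ Set.Icc (0 : ℝ) 1)
    (hfAtomless : ∀ c : ℝ, μ.map f {c} = 0)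
    (U U' : Set X) (hU : MeasurableSet U) (hU' : MeasurableSet U')
    (hUpos : 0 < μ U) (hU'pos : 0 < μ U')
    (hUU' : ∀ x ∈ U, ∀ x' ∈ U', f x ≤ f x' ∧ g x' < g x)
    (t : ℝ) (ht : t ∈ Set.Icc (0 : ℝ) 1)
    (htU : ∀ x ∈ U, f x ≤ t) (htU' : ∀ x' ∈ U', t ≤ f x') :
    ∀ t' ∈ Set.Icc (0 : ℝ) 1,
      ¬ ((fun x => if t < f x then (1 : ℝ) else 0) =ᵐ[μ]
          (fun x => if t' < g x then (1 : ℝ) else 0)) :=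
  threshold_decision_not_realizable_general μ f g hf hfAtomless U U' hUpos hU'pos hUU' t htU htU'
end

section
/- Assume the pushforward measures of both f and g are atomless. Suppose that for μ⊗μ-almost every pair (x,x') ∈ X × X, f(x) ≤ f(x') implies g(x) ≤ g(x'). Then there exists a monotone non-decreasing function β : [0,1] → [0,1] such that g(x) = β(f(x)) for μ-almost every x ∈ X. -/
/-!
Read in both directions, the order hypothesis gives, for a.e. `x`, `F (f x) ≤ G (g x)` for the
distribution functions `F`, `G` of `f`, `g`, and the same inequality reversed with strict
sublevel sets; atomlessness makes the two kinds of sublevel sets agree, so `F (f x) = G (g x)`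
a.e. Almost every value of `g` is a point where `G` increases strictly from the left, so a
generalized inverse `G⁻¹` recovers `g x` from `G (g x)`, and `β = G⁻¹ ∘ F` is monotone.
-/

open MeasureTheory Set

open scoped ENNReal

section LeftSupport

variable (ν : Measure ℝ)

lemma measure_setOf_measure_Ioc_eq_zero (r : ℝ) :
    ν {s | r < s ∧ ν (Ioc r s) = 0} = 0 := by
  set S := {s | r < s ∧ ν (Ioc r s) = 0}
  have mem_of_le : ∀ s ∈ S, ∀ s', r < s' → s' ≤ s → s' ∈ S := fun s hs s' hrs' hs's =>
    ⟨hrs', measure_mono_null (Ioc_subset_Ioc_right hs's) hs.2⟩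
  -- `S` is an interval with left end `r`: it is covered by its rational points and its maximum.
  set T := (range ((↑) : ℚ → ℝ) ∩ S) ∪ (S ∩ upperBounds S)
  have hT : T.Countable :=
    ((countable_range _).mono inter_subset_left).union
      (Subsingleton.countable fun a ha b hb => le_antisymm (hb.2 ha.1) (ha.2 hb.1))
  have hST : S ⊆ ⋃ s ∈ T, Ioc r s := by
    intro s hs
    by_cases hmax : s ∈ upperBounds S
    · exact mem_biUnion (Or.inr ⟨hs, hmax⟩) ⟨hs.1, le_rfl⟩
    · obtain ⟨s', hs', hss'⟩ : ∃ s' ∈ S, s < s' := by simpa [mem_upperBounds] using hmax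
      obtain ⟨q, hsq, hqs'⟩ := exists_rat_btwn hss'
      exact mem_biUnion (Or.inl ⟨mem_range_self q, mem_of_le s' hs' q (hs.1.trans hsq) hqs'.le⟩)
        ⟨hs.1, hsq.le⟩
  exact measure_mono_null hST ((measure_biUnion_null_iff hT).2 fun s hs =>
    (union_subset inter_subset_right inter_subset_left hs).2)

lemma ae_forall_lt_measure_Ioc_pos : ∀ᵐ s ∂ν, ∀ t < s, 0 < ν (Ioc t s) := by
  rw [ae_iff]
  push Not
  refine measure_mono_null (t := ⋃ q : ℚ, {s | (q : ℝ) < s ∧ ν (Ioc q s) = 0}) ?_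
    (measure_iUnion_null fun q => measure_setOf_measure_Ioc_eq_zero ν q)
  rintro s ⟨t, hts, hnull⟩
  obtain ⟨q, htq, hqs⟩ := exists_rat_btwn hts
  exact mem_iUnion.2
    ⟨q, hqs, measure_mono_null (Ioc_subset_Ioc_left htq.le) (nonpos_iff_eq_zero.1 hnull)⟩

lemma ae_forall_lt_measure_Iic_lt [IsFiniteMeasure ν] :
    ∀ᵐ s ∂ν, ∀ t < s, ν (Iic t) < ν (Iic s) := by
  filter_upwards [ae_forall_lt_measure_Ioc_pos ν] with s hs t hts
  rw [← Iic_union_Ioc_eq_Iic hts.le, measure_union (Iic_disjoint_Ioc le_rfl) measurableSet_Ioc]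
  exact ENNReal.lt_add_right (measure_ne_top _ _) (hs t hts).ne'

end LeftSupport

section UnitQuantile

variable (ν : Measure ℝ)

/-- A `[0, 1]`-valued generalized inverse of the distribution function of `ν`; the default `1`
keeps it monotone when no `t ∈ [0, 1]` reaches level `p`. -/
noncomputable def unitQuantile (p : ℝ≥0∞) : ℝ :=
  sInf (insert 1 {t ∈ Icc (0 : ℝ) 1 | p ≤ ν (Iic t)})

lemma bddBelow_unitQuantile_set (p : ℝ≥0∞) :
    BddBelow (insert 1 {t ∈ Icc (0 : ℝ) 1 | p ≤ ν (Iic t)}) :=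
  ⟨0, forall_mem_insert.2 ⟨zero_le_one, fun _ ht => ht.1.1⟩⟩

lemma unitQuantile_mem_Icc (p : ℝ≥0∞) : unitQuantile ν p ∈ Icc 0 1 :=
  ⟨le_csInf (insert_nonempty _ _) (forall_mem_insert.2 ⟨zero_le_one, fun _ ht => ht.1.1⟩),
    csInf_le (bddBelow_unitQuantile_set ν p) (mem_insert _ _)⟩

lemma monotone_unitQuantile : Monotone (unitQuantile ν) := fun p _ hpq =>
  csInf_le_csInf (bddBelow_unitQuantile_set ν p) (insert_nonempty _ _)
    (insert_subset_insert fun _ ht => ⟨ht.1, hpq.trans ht.2⟩)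

lemma unitQuantile_measure_Iic {s : ℝ} (hs : s ∈ Icc 0 1)
    (hstrict : ∀ t < s, ν (Iic t) < ν (Iic s)) : unitQuantile ν (ν (Iic s)) = s :=
  le_antisymm (csInf_le (bddBelow_unitQuantile_set ν _) (mem_insert_of_mem _ ⟨hs, le_rfl⟩))
    (le_csInf (insert_nonempty _ _) (forall_mem_insert.2 ⟨hs.2,
      fun t ht => not_lt.1 fun hts => (hstrict t hts).not_ge ht.2⟩))

end UnitQuantile

section OrderTransfer

variable {X : Type*} [MeasurableSpace X] {μ : Measure X} [SFinite μ] {f g : X → ℝ}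

lemma ae_map_Iic_le_of_ae_prod (hf : Measurable f) (hg : Measurable g)
    (hmono : ∀ᵐ q ∂(μ.prod μ), f q.1 ≤ f q.2 → g q.1 ≤ g q.2) :
    ∀ᵐ x ∂μ, μ.map f (Iic (f x)) ≤ μ.map g (Iic (g x)) := by
  have hswap : ∀ᵐ x ∂μ, ∀ᵐ y ∂μ, f y ≤ f x → g y ≤ g x :=
    Measure.ae_ae_of_ae_prod (Measure.measurePreserving_swap.quasiMeasurePreserving.ae hmono)
  filter_upwards [hswap] with x hx
  rw [Measure.map_apply hf measurableSet_Iic, Measure.map_apply hg measurableSet_Iic]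
  exact measure_mono_ae hx

lemma ae_map_Iio_le_of_ae_prod (hf : Measurable f) (hg : Measurable g)
    (hmono : ∀ᵐ q ∂(μ.prod μ), f q.1 ≤ f q.2 → g q.1 ≤ g q.2) :
    ∀ᵐ x ∂μ, μ.map g (Iio (g x)) ≤ μ.map f (Iio (f x)) := by
  filter_upwards [Measure.ae_ae_of_ae_prod hmono] with x hx
  rw [Measure.map_apply hf measurableSet_Iio, Measure.map_apply hg measurableSet_Iio]
  exact measure_mono_ae (hx.mono fun y hy hgy => lt_of_not_ge (mt hy (not_le.2 hgy)))

lemma ae_map_Iic_eq_of_ae_prod (hf : Measurable f) (hg : Measurable g)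
    (hfA : ∀ c, μ.map f {c} = 0) (hgA : ∀ c, μ.map g {c} = 0)
    (hmono : ∀ᵐ q ∂(μ.prod μ), f q.1 ≤ f q.2 → g q.1 ≤ g q.2) :
    ∀ᵐ x ∂μ, μ.map f (Iic (f x)) = μ.map g (Iic (g x)) := by
  filter_upwards [ae_map_Iic_le_of_ae_prod hf hg hmono, ae_map_Iio_le_of_ae_prod hf hg hmono]
    with x hle hge
  rw [measure_congr (Iio_ae_eq_Iic' (hgA _)), measure_congr (Iio_ae_eq_Iic' (hfA _))] at hge
  exact hle.antisymm hge

end OrderTransfer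

theorem exists_monotone_bias_function_general
    {X : Type*} [MeasurableSpace X] (μ : Measure X) [IsProbabilityMeasure μ]
    (f g : X → ℝ) (hf : Measurable f) (hg : Measurable g)
    (hg01 : ∀ x, g x ∈ Set.Icc (0 : ℝ) 1)
    (hfAtomless : ∀ c : ℝ, μ.map f {c} = 0) (hgAtomless : ∀ c : ℝ, μ.map g {c} = 0)
    (hmono : ∀ᵐ q ∂(μ.prod μ), f q.1 ≤ f q.2 → g q.1 ≤ g q.2) :
    ∃ β : ℝ → ℝ, MonotoneOn β (Set.Icc (0 : ℝ) 1) ∧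
      (∀ u ∈ Set.Icc (0 : ℝ) 1, β u ∈ Set.Icc (0 : ℝ) 1) ∧
      (∀ᵐ x ∂μ, g x = β (f x)) := by
  have hF : Monotone fun u => μ.map f (Iic u) := fun _ _ h => measure_mono (Iic_subset_Iic.2 h)
  refine ⟨fun u => unitQuantile (μ.map g) (μ.map f (Iic u)),
    ((monotone_unitQuantile _).comp hF).monotoneOn _, fun u _ => unitQuantile_mem_Icc _ _, ?_⟩
  filter_upwards [ae_map_Iic_eq_of_ae_prod hf hg hfAtomless hgAtomless hmono,
    ae_of_ae_map hg.aemeasurable (ae_forall_lt_measure_Iic_lt (μ.map g))] with x hkey hstrict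
  rw [hkey, unitQuantile_measure_Iic _ (hg01 x) hstrict]

/-- the bias-function construction.
If, for `μ⊗μ`-almost every pair, `f`-order implies `g`-order, then there is a
non-decreasing bias function `β : [0,1] → [0,1]` with `g = β ∘ f` `μ`-a.e. -/
theorem exists_monotone_bias_function
    {X : Type*} [MeasurableSpace X] (μ : Measure X) [IsProbabilityMeasure μ]
    (f g : X → ℝ) (hf : Measurable f) (hg : Measurable g)
    (hf01 : ∀ x, f x ∈ Set.Icc (0 : ℝ) 1) (hg01 : ∀ x, g x ∈ Set.Icc (0 : ℝ) 1)
    (hfAtomless : ∀ c : ℝ, μ.map f {c} = 0) (hgAtomless : ∀ c : ℝ, μ.map g {c} = 0)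
    (hmono : ∀ᵐ q ∂(μ.prod μ), f q.1 ≤ f q.2 → g q.1 ≤ g q.2) :
    ∃ β : ℝ → ℝ, MonotoneOn β (Set.Icc (0 : ℝ) 1) ∧
      (∀ u ∈ Set.Icc (0 : ℝ) 1, β u ∈ Set.Icc (0 : ℝ) 1) ∧
      (∀ᵐ x ∂μ, g x = β (f x)) :=
  exists_monotone_bias_function_general μ f g hf hg hg01 hfAtomless hgAtomless hmono
end

section
/- For every τ ∈ [0,1], the threshold-τ decision on p, i.e., the decision Ŷ(x) = 1 if p(x) > τ and Ŷ(x) = 0 otherwise, is Pareto maximal. -/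
open MeasureTheory

/-- Fair true positive rate of a decision `Y` w.r.t. probabilities `p`. -/
noncomputable def TPR {X : Type*} [MeasurableSpace X] (μ : Measure X)
    (p Y : X → ℝ) : ℝ :=
  (∫ x, Y x * p x ∂μ) / (∫ x, p x ∂μ)

/-- Fair true negative rate of a decision `Y` w.r.t. probabilities `p`. -/
noncomputable def TNR {X : Type*} [MeasurableSpace X] (μ : Measure X)
    (p Y : X → ℝ) : ℝ :=
  (∫ x, (1 - Y x) * (1 - p x) ∂μ) / (∫ x, (1 - p x) ∂μ)

private lemma integrable_of_abs_bound {X : Type*} [MeasurableSpace X] (μ : Measure X)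
    [IsProbabilityMeasure μ] (f : X → ℝ) (hf : Measurable f) (C : ℝ)
    (hC : ∀ x, |f x| ≤ C) : Integrable f μ :=
  ⟨hf.aestronglyMeasurable, HasFiniteIntegral.of_bounded (C := C) (ae_of_all μ hC)⟩

/-- every threshold decision on `p` is Pareto maximal with
respect to the fair true positive and true negative rates. -/
theorem threshold_decision_pareto_maximal
    {X : Type*} [MeasurableSpace X] (μ : Measure X) [IsProbabilityMeasure μ]
    (p : X → ℝ) (hp : Measurable p) (hp01 : ∀ x, p x ∈ Set.Icc (0 : ℝ) 1)
    (hppos : 0 < ∫ x, p x ∂μ) (hplt : (∫ x, p x ∂μ) < 1)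
    (hpAtomless : ∀ c : ℝ, μ.map p {c} = 0)
    (τ : ℝ) (hτ : τ ∈ Set.Icc (0 : ℝ) 1) :
    ∀ Y' : X → ℝ, Measurable Y' → (∀ x, Y' x = 0 ∨ Y' x = 1) →
      (TPR μ p Y' ≥ TPR μ p (fun x => if τ < p x then (1 : ℝ) else 0) ∧
        TNR μ p Y' ≥ TNR μ p (fun x => if τ < p x then (1 : ℝ) else 0)) →
      (TPR μ p (fun x => if τ < p x then (1 : ℝ) else 0) ≥ TPR μ p Y' ∧
        TNR μ p (fun x => if τ < p x then (1 : ℝ) else 0) ≥ TNR μ p Y') := by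
  intro Y' hY'm hY'01 h
  obtain ⟨h1, h2⟩ := h
  set T : X → ℝ := fun x => if τ < p x then (1 : ℝ) else 0 with hTdef
  have hTm : Measurable T := Measurable.ite (measurableSet_lt measurable_const hp)
    measurable_const measurable_const
  have hT01 : ∀ x, T x = 0 ∨ T x = 1 := by
    intro x; by_cases hx : τ < p x <;> simp [hTdef, hx]
  -- bounds
  have hpb : ∀ x, |p x| ≤ 1 := fun x => abs_le.2 ⟨by linarith [(hp01 x).1], (hp01 x).2⟩
  have hY'b : ∀ x, |Y' x| ≤ 1 := by
    intro x; rcases hY'01 x with hx | hx <;> simp [hx]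
  have hTb : ∀ x, |T x| ≤ 1 := by
    intro x; rcases hT01 x with hx | hx <;> simp [hx]
  -- integrability
  have hpInt : Integrable p μ := integrable_of_abs_bound μ p hp 1 hpb
  have hInt1 : Integrable (fun x => Y' x * p x) μ :=
    integrable_of_abs_bound μ _ (hY'm.mul hp) 1 (by
      intro x; rw [abs_mul]
      exact mul_le_one₀ (hY'b x) (abs_nonneg _) (hpb x))
  have hInt2 : Integrable (fun x => T x * p x) μ :=
    integrable_of_abs_bound μ _ (hTm.mul hp) 1 (by
      intro x; rw [abs_mul]
      exact mul_le_one₀ (hTb x) (abs_nonneg _) (hpb x))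
  have hIntY' : Integrable Y' μ := integrable_of_abs_bound μ _ hY'm 1 hY'b
  have hIntT : Integrable T μ := integrable_of_abs_bound μ _ hTm 1 hTb
  -- denominators
  have hQ : (∫ x, (1 - p x) ∂μ) = 1 - ∫ x, p x ∂μ := by
    rw [integral_sub (integrable_const 1) hpInt]
    simp
  have hQpos : 0 < ∫ x, (1 - p x) ∂μ := by rw [hQ]; linarith
  -- from TPR hypothesis
  have hTPR : (∫ x, T x * p x ∂μ) ≤ ∫ x, Y' x * p x ∂μ := by
    have := h1
    rw [TPR, TPR, ge_iff_le, div_le_div_iff_of_pos_right hppos] at this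
    exact this
  -- from TNR hypothesis
  have hTNR : (∫ x, (1 - T x) * (1 - p x) ∂μ) ≤ ∫ x, (1 - Y' x) * (1 - p x) ∂μ := by
    have := h2
    rw [TNR, TNR, ge_iff_le, div_le_div_iff_of_pos_right hQpos] at this
    exact this
  -- A and B
  set A : ℝ := (∫ x, T x * p x ∂μ) - ∫ x, Y' x * p x ∂μ with hAdef
  set B : ℝ := (∫ x, T x ∂μ) - ∫ x, Y' x ∂μ with hBdef
  have hA : A ≤ 0 := by simp [hAdef]; linarith
  have hBA : A ≤ B := by
    have hIntc : Integrable (fun x => (1:ℝ) - p x) μ :=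
      integrable_of_abs_bound μ _ (measurable_const.sub hp) 2 (by
        intro x; have := hp01 x; rw [abs_le]; constructor <;> [linarith [this.2]; linarith [this.1]])
    have hIntT2 : Integrable (fun x => T x - T x * p x) μ :=
      integrable_of_abs_bound μ _ (hTm.sub (hTm.mul hp)) 2 (by
        intro x; have h1 := abs_sub (T x) (T x * p x)
        calc |T x - T x * p x| ≤ |T x| + |T x * p x| := abs_sub _ _
          _ ≤ 2 := by
            rw [abs_mul]
            nlinarith [hTb x, hpb x, abs_nonneg (T x), abs_nonneg (p x)])
    have hIntY2 : Integrable (fun x => Y' x - Y' x * p x) μ :=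
      integrable_of_abs_bound μ _ (hY'm.sub (hY'm.mul hp)) 2 (by
        intro x
        calc |Y' x - Y' x * p x| ≤ |Y' x| + |Y' x * p x| := abs_sub _ _
          _ ≤ 2 := by
            rw [abs_mul]
            nlinarith [hY'b x, hpb x, abs_nonneg (Y' x), abs_nonneg (p x)])
    have e1 : (∫ x, (1 - T x) * (1 - p x) ∂μ)
        = 1 - (∫ x, p x ∂μ) - (∫ x, T x ∂μ) + ∫ x, T x * p x ∂μ := by
      have h : (fun x => (1 - T x) * (1 - p x))
          = fun x => (1 - p x) - (T x - T x * p x) := by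
        funext x; ring
      rw [h, integral_sub hIntc hIntT2, integral_sub (integrable_const 1) hpInt,
        integral_sub hIntT hInt2]
      simp; ring
    have e2 : (∫ x, (1 - Y' x) * (1 - p x) ∂μ)
        = 1 - (∫ x, p x ∂μ) - (∫ x, Y' x ∂μ) + ∫ x, Y' x * p x ∂μ := by
      have h : (fun x => (1 - Y' x) * (1 - p x))
          = fun x => (1 - p x) - (Y' x - Y' x * p x) := by
        funext x; ring
      rw [h, integral_sub hIntc hIntY2, integral_sub (integrable_const 1) hpInt,
        integral_sub hIntY' hInt1]
      simp; ring
    rw [e1, e2] at hTNR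
    simp [hAdef, hBdef]
    linarith
  -- the nonnegative function g
  set g : X → ℝ := fun x => (T x - Y' x) * (p x - τ) with hgdef
  have hgnn : ∀ x, 0 ≤ g x := by
    intro x
    by_cases hx : τ < p x
    · have hT1 : T x = 1 := by simp [hTdef, hx]
      rcases hY'01 x with hy | hy <;> rw [hgdef] <;> simp [hT1, hy] <;> nlinarith
    · have hT0 : T x = 0 := by simp [hTdef, hx]
      push_neg at hx
      rcases hY'01 x with hy | hy <;> rw [hgdef] <;> simp [hT0, hy] <;> nlinarith
  have hgInt : Integrable g μ := by
    have : g = fun x => (T x * p x - Y' x * p x) - (τ * T x - τ * Y' x) := by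
      funext x; rw [hgdef]; ring
    rw [this]
    exact ((hInt2.sub hInt1).sub ((hIntT.const_mul τ).sub (hIntY'.const_mul τ)))
  have hgint_eq : (∫ x, g x ∂μ) = A - τ * B := by
    have hI3 : Integrable (fun x => T x * p x - Y' x * p x) μ :=
      integrable_of_abs_bound μ _ ((hTm.mul hp).sub (hY'm.mul hp)) 2 (by
        intro x
        calc |T x * p x - Y' x * p x| ≤ |T x * p x| + |Y' x * p x| := abs_sub _ _
          _ ≤ 2 := by
            rw [abs_mul, abs_mul]
            nlinarith [hTb x, hpb x, hY'b x, abs_nonneg (T x), abs_nonneg (p x), abs_nonneg (Y' x)])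
    have hI4 : Integrable (fun x => τ * T x - τ * Y' x) μ :=
      integrable_of_abs_bound μ _ ((hTm.const_mul τ).sub (hY'm.const_mul τ)) (2 * |τ|) (by
        intro x
        calc |τ * T x - τ * Y' x| ≤ |τ * T x| + |τ * Y' x| := abs_sub _ _
          _ ≤ 2 * |τ| := by
            rw [abs_mul, abs_mul]
            nlinarith [hTb x, hY'b x, abs_nonneg τ])
    have h : g = fun x => (T x * p x - Y' x * p x) - (τ * T x - τ * Y' x) := by
      funext x; rw [hgdef]; ring
    have hIT : (∫ x, τ * T x ∂μ) = τ * ∫ x, T x ∂μ := integral_const_mul τ T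
    have hIY : (∫ x, τ * Y' x ∂μ) = τ * ∫ x, Y' x ∂μ := integral_const_mul τ Y'
    rw [h, integral_sub hI3 hI4, integral_sub hInt2 hInt1,
      integral_sub (hIntT.const_mul τ) (hIntY'.const_mul τ), hIT, hIY]
    rw [hAdef, hBdef]; ring
  have hgzero : (∫ x, g x ∂μ) = 0 := by
    have hge : 0 ≤ ∫ x, g x ∂μ := integral_nonneg hgnn
    have hle : (∫ x, g x ∂μ) ≤ 0 := by
      rw [hgint_eq]
      nlinarith [mul_nonneg hτ.1 (sub_nonneg.2 hBA),
        mul_nonpos_of_nonneg_of_nonpos (by linarith [hτ.2] : (0:ℝ) ≤ 1 - τ) hA]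
    linarith
  have hgae : g =ᵐ[μ] 0 :=
    (integral_eq_zero_iff_of_nonneg hgnn hgInt).mp hgzero
  -- the level set {p = τ} is null
  have hlevel : ∀ᵐ x ∂μ, p x ≠ τ := by
    have h0 : μ (p ⁻¹' {τ}) = 0 := by
      rw [← Measure.map_apply hp (measurableSet_singleton τ)]
      exact hpAtomless τ
    rw [ae_iff]
    push_neg
    exact h0
  -- T = Y' a.e.
  have hTY : T =ᵐ[μ] Y' := by
    filter_upwards [hgae, hlevel] with x hgx hne
    have : (T x - Y' x) * (p x - τ) = 0 := hgx
    rcases mul_eq_zero.mp this with h | h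
    · linarith [sub_eq_zero.mp h]
    · exact absurd (by linarith [sub_eq_zero.mp h] : p x = τ) hne
  have eTPR : TPR μ p T = TPR μ p Y' := by
    rw [TPR, TPR]
    congr 1
    exact integral_congr_ae (hTY.mono fun x hx => by dsimp only; rw [hx])
  have eTNR : TNR μ p T = TNR μ p Y' := by
    rw [TNR, TNR]
    congr 1
    exact integral_congr_ae (hTY.mono fun x hx => by dsimp only; rw [hx])
  exact ⟨le_of_eq eTPR.symm, le_of_eq eTNR.symm⟩
end

section
/- If Ŷ is a Pareto maximal decision, then there exists τ ∈ [0,1] such that Ŷ agrees μ-almost everywhere with the threshold-τ decision on p, i.e., for μ-almost every x, Ŷ(x) = 1 if p(x) > τ and Ŷ(x) = 0 otherwise. -/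
/-!
Choose `τ` so that the threshold decision `T = 1{p > τ}` accepts the same mass as `Y`: this is
possible by the intermediate value theorem, because `τ ↦ μ {p > τ}` is continuous when `p` has
no atoms. Pointwise `(T - Y) (p - τ) ≥ 0`, so integrating with equal masses gives
`∫ T p ≥ ∫ Y p` (the Neyman–Pearson argument). With equal masses the TNR numerators differ by
exactly as much as the TPR numerators, so `T` Pareto dominates `Y`. Maximality of `Y` then
forces `∫ T p = ∫ Y p`, hence `(T - Y) (p - τ) = 0` almost everywhere, and as `p ≠ τ` almost
everywhere, `Y = T` almost everywhere.
-/

open MeasureTheory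

open Filter Set unitInterval

section

variable {X : Type*} {p : X → ℝ}

noncomputable def thresholdDecision (p : X → ℝ) (τ : ℝ) (x : X) : ℝ :=
  if τ < p x then 1 else 0

lemma thresholdDecision_eq_zero_or_one (p : X → ℝ) (τ : ℝ) (x : X) :
    thresholdDecision p τ x = 0 ∨ thresholdDecision p τ x = 1 := by
  unfold thresholdDecision; split_ifs <;> simp

lemma thresholdDecision_mem_unitInterval (p : X → ℝ) (τ : ℝ) (x : X) :
    thresholdDecision p τ x ∈ I := by
  rcases thresholdDecision_eq_zero_or_one p τ x with h | h <;> simp [h]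

lemma continuousAt_thresholdDecision {x : X} {τ : ℝ} (hx : p x ≠ τ) :
    ContinuousAt (fun t => thresholdDecision p t x) τ := by
  rcases hx.lt_or_gt with h | h
  · exact EventuallyEq.continuousAt (y := 0) <|
      eventually_of_mem (Ioi_mem_nhds h) fun t ht => if_neg (not_lt.2 (le_of_lt ht))
  · exact EventuallyEq.continuousAt (y := 1) <|
      eventually_of_mem (Iio_mem_nhds h) fun t ht => if_pos ht

lemma thresholdDecision_sub_mul_sub_nonneg {y : ℝ} (hy : y ∈ I) (τ : ℝ) (x : X) :
    0 ≤ (thresholdDecision p τ x - y) * (p x - τ) := by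
  unfold thresholdDecision
  split_ifs with h
  · exact mul_nonneg (sub_nonneg.2 hy.2) (sub_nonneg.2 h.le)
  · exact mul_nonneg_of_nonpos_of_nonpos (by linarith [hy.1]) (by linarith [not_lt.1 h])

end

section

variable {X : Type*} [MeasurableSpace X] {μ : Measure X} {p Y : X → ℝ}

lemma ae_ne_of_map_singleton_eq_zero_s8 (hp : Measurable p) {c : ℝ} (h : μ.map p {c} = 0) :
    ∀ᵐ x ∂μ, p x ≠ c := by
  rw [Measure.map_apply hp (measurableSet_singleton c)] at h
  exact measure_mono_null (fun x hx => by simpa using hx) h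

lemma integrable_of_mem_unitInterval [IsFiniteMeasure μ] {f : X → ℝ} (hf : Measurable f)
    (h : ∀ x, f x ∈ I) : Integrable f μ :=
  .of_mem_Icc 0 1 hf.aemeasurable (ae_of_all _ h)

lemma measurable_thresholdDecision (hp : Measurable p) (τ : ℝ) :
    Measurable (thresholdDecision p τ) :=
  Measurable.ite (measurableSet_lt measurable_const hp) measurable_const measurable_const

lemma continuous_integral_thresholdDecision [IsFiniteMeasure μ] (hp : Measurable p)
    (hatom : ∀ c : ℝ, μ.map p {c} = 0) :
    Continuous fun τ => ∫ x, thresholdDecision p τ x ∂μ := by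
  refine continuous_iff_continuousAt.2 fun τ => continuousAt_of_dominated (bound := 1)
    (.of_forall fun t => (measurable_thresholdDecision hp t).aestronglyMeasurable)
    (.of_forall fun t => ae_of_all _ fun x => ?_) (integrable_const 1)
    ((ae_ne_of_map_singleton_eq_zero_s8 hp (hatom τ)).mono fun x hx =>
      continuousAt_thresholdDecision hx)
  rcases thresholdDecision_eq_zero_or_one p t x with h | h <;> simp [h]

lemma exists_integral_thresholdDecision_eq [IsProbabilityMeasure μ] (hp : Measurable p)
    (hp01 : ∀ x, p x ∈ I) (hatom : ∀ c : ℝ, μ.map p {c} = 0) {m : ℝ} (hm : m ∈ I) :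
    ∃ τ ∈ I, ∫ x, thresholdDecision p τ x ∂μ = m := by
  have h_one : ∫ x, thresholdDecision p 1 x ∂μ = 0 :=
    integral_eq_zero_of_ae (ae_of_all _ fun x => if_neg (not_lt.2 (hp01 x).2))
  have h_zero : ∫ x, thresholdDecision p 0 x ∂μ = 1 := by
    have : thresholdDecision p 0 =ᵐ[μ] 1 :=
      (ae_ne_of_map_singleton_eq_zero_s8 hp (hatom 0)).mono fun x hx =>
        if_pos (lt_of_le_of_ne (hp01 x).1 hx.symm)
    simp [integral_congr_ae this]
  exact intermediate_value_Icc' zero_le_one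
    (continuous_integral_thresholdDecision hp hatom).continuousOn (by rwa [h_one, h_zero])

lemma integral_mem_unitInterval [IsProbabilityMeasure μ] (hY01 : ∀ x, Y x ∈ I) :
    ∫ x, Y x ∂μ ∈ I :=
  ⟨integral_nonneg fun x => (hY01 x).1,
    (integral_mono_of_nonneg (ae_of_all _ fun x => (hY01 x).1) (integrable_const 1)
      (ae_of_all _ fun x => (hY01 x).2)).trans_eq (by simp)⟩

lemma integral_one_sub_mul_one_sub [IsProbabilityMeasure μ] (hp : Measurable p)
    (hp01 : ∀ x, p x ∈ I) (hY : Measurable Y) (hY01 : ∀ x, Y x ∈ I) :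
    ∫ x, (1 - Y x) * (1 - p x) ∂μ = 1 - ∫ x, p x ∂μ - ∫ x, Y x ∂μ + ∫ x, Y x * p x ∂μ := by
  have hpi : Integrable p μ := integrable_of_mem_unitInterval hp hp01
  have hYi : Integrable Y μ := integrable_of_mem_unitInterval hY hY01
  have hYpi : Integrable (fun x => Y x * p x) μ :=
    integrable_of_mem_unitInterval (hY.mul hp) fun x => mul_mem (hY01 x) (hp01 x)
  have hexpand : (fun x => (1 - Y x) * (1 - p x)) = fun x => 1 - p x - Y x + Y x * p x := by
    ext x; ring
  have h1p : Integrable (fun x => 1 - p x) μ := (integrable_const 1).sub hpi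
  rw [hexpand, integral_add (by exact h1p.sub hYi) hYpi, integral_sub h1p hYi,
    integral_sub (integrable_const 1) hpi]
  simp

lemma TPR_le_and_TNR_le_of_integral_eq [IsProbabilityMeasure μ] (hp : Measurable p)
    (hp01 : ∀ x, p x ∈ I) {Y' : X → ℝ} (hY : Measurable Y) (hY01 : ∀ x, Y x ∈ I)
    (hY' : Measurable Y') (hY'01 : ∀ x, Y' x ∈ I) (hmass : ∫ x, Y x ∂μ = ∫ x, Y' x ∂μ)
    (hgain : ∫ x, Y x * p x ∂μ ≤ ∫ x, Y' x * p x ∂μ) :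
    TPR μ p Y ≤ TPR μ p Y' ∧ TNR μ p Y ≤ TNR μ p Y' := by
  refine ⟨div_le_div_of_nonneg_right hgain (integral_nonneg fun x => (hp01 x).1),
    div_le_div_of_nonneg_right ?_ (integral_nonneg fun x => sub_nonneg.2 (hp01 x).2)⟩
  rw [integral_one_sub_mul_one_sub hp hp01 hY hY01,
    integral_one_sub_mul_one_sub hp hp01 hY' hY'01]
  linarith

section NeymanPearson

variable [IsFiniteMeasure μ] {τ : ℝ}

lemma integral_thresholdDecision_sub_mul_sub (hp : Measurable p) (hp01 : ∀ x, p x ∈ I)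
    (hY : Measurable Y) (hY01 : ∀ x, Y x ∈ I)
    (hmass : ∫ x, thresholdDecision p τ x ∂μ = ∫ x, Y x ∂μ) :
    ∫ x, (thresholdDecision p τ x - Y x) * (p x - τ) ∂μ =
      ∫ x, thresholdDecision p τ x * p x ∂μ - ∫ x, Y x * p x ∂μ := by
  have hT := measurable_thresholdDecision hp τ
  have hTi : Integrable (thresholdDecision p τ) μ :=
    integrable_of_mem_unitInterval hT (thresholdDecision_mem_unitInterval p τ)
  have hYi : Integrable Y μ := integrable_of_mem_unitInterval hY hY01
  have hTpi : Integrable (fun x => thresholdDecision p τ x * p x) μ :=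
    integrable_of_mem_unitInterval (hT.mul hp)
      fun x => mul_mem (thresholdDecision_mem_unitInterval p τ x) (hp01 x)
  have hYpi : Integrable (fun x => Y x * p x) μ :=
    integrable_of_mem_unitInterval (hY.mul hp) fun x => mul_mem (hY01 x) (hp01 x)
  have hexpand : (fun x => (thresholdDecision p τ x - Y x) * (p x - τ)) =
      fun x => (thresholdDecision p τ x * p x - Y x * p x) -
        τ * (thresholdDecision p τ x - Y x) := by
    ext x; ring
  rw [hexpand, integral_sub (by exact hTpi.sub hYpi) (by exact (hTi.sub hYi).const_mul τ),
    integral_const_mul, integral_sub hTpi hYpi, integral_sub hTi hYi, hmass]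
  ring

lemma integral_mul_le_integral_thresholdDecision_mul (hp : Measurable p)
    (hp01 : ∀ x, p x ∈ I) (hY : Measurable Y) (hY01 : ∀ x, Y x ∈ I)
    (hmass : ∫ x, thresholdDecision p τ x ∂μ = ∫ x, Y x ∂μ) :
    ∫ x, Y x * p x ∂μ ≤ ∫ x, thresholdDecision p τ x * p x ∂μ := by
  have hgap := integral_thresholdDecision_sub_mul_sub hp hp01 hY hY01 hmass
  have := integral_nonneg (μ := μ)
    (f := fun x => (thresholdDecision p τ x - Y x) * (p x - τ))
    fun x => thresholdDecision_sub_mul_sub_nonneg (hY01 x) τ x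
  linarith

lemma ae_eq_thresholdDecision_of_integral_mul_le (hp : Measurable p)
    (hp01 : ∀ x, p x ∈ I) (hY : Measurable Y) (hY01 : ∀ x, Y x ∈ I) (hτ : ∀ᵐ x ∂μ, p x ≠ τ)
    (hmass : ∫ x, thresholdDecision p τ x ∂μ = ∫ x, Y x ∂μ)
    (hgain : ∫ x, thresholdDecision p τ x * p x ∂μ ≤ ∫ x, Y x * p x ∂μ) :
    Y =ᵐ[μ] thresholdDecision p τ := by
  have hint : Integrable (fun x => (thresholdDecision p τ x - Y x) * (p x - τ)) μ :=
    ((integrable_of_mem_unitInterval (measurable_thresholdDecision hp τ)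
      (thresholdDecision_mem_unitInterval p τ)).sub
        (integrable_of_mem_unitInterval hY hY01)).mul_bdd
      (c := 1 + |τ|) (hp.sub measurable_const).aestronglyMeasurable
      (ae_of_all _ fun x => (norm_sub_le _ _).trans
        (by simpa [abs_of_nonneg (hp01 x).1] using (hp01 x).2))
  have hzero : (fun x => (thresholdDecision p τ x - Y x) * (p x - τ)) =ᵐ[μ] 0 := by
    refine (integral_eq_zero_iff_of_nonneg
      (fun x => thresholdDecision_sub_mul_sub_nonneg (hY01 x) τ x) hint).1 ?_
    have := integral_mul_le_integral_thresholdDecision_mul hp hp01 hY hY01 hmass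
    linarith [integral_thresholdDecision_sub_mul_sub hp hp01 hY hY01 hmass]
  filter_upwards [hzero, hτ] with x hx hxτ
  rcases mul_eq_zero.1 hx with h | h
  · linarith
  · exact absurd (sub_eq_zero.1 h) hxτ

end NeymanPearson

end

theorem pareto_maximal_is_threshold_decision_general
    {X : Type*} [MeasurableSpace X] (μ : Measure X) [IsProbabilityMeasure μ]
    (p : X → ℝ) (hp : Measurable p) (hp01 : ∀ x, p x ∈ Set.Icc (0 : ℝ) 1)
    (hppos : 0 < ∫ x, p x ∂μ)
    (hpAtomless : ∀ c : ℝ, μ.map p {c} = 0)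
    (Y : X → ℝ) (hY : Measurable Y) (hY01 : ∀ x, Y x = 0 ∨ Y x = 1)
    (hmax : ∀ Y' : X → ℝ, Measurable Y' → (∀ x, Y' x = 0 ∨ Y' x = 1) →
      (TPR μ p Y' ≥ TPR μ p Y ∧ TNR μ p Y' ≥ TNR μ p Y) →
      (TPR μ p Y ≥ TPR μ p Y' ∧ TNR μ p Y ≥ TNR μ p Y')) :
    ∃ τ ∈ Set.Icc (0 : ℝ) 1,
      Y =ᵐ[μ] (fun x => if τ < p x then (1 : ℝ) else 0) := by
  have hYI : ∀ x, Y x ∈ I := fun x => by rcases hY01 x with h | h <;> simp [h]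
  obtain ⟨τ, hτ, hmass⟩ :=
    exists_integral_thresholdDecision_eq hp hp01 hpAtomless
      (integral_mem_unitInterval (μ := μ) hYI)
  set T := thresholdDecision p τ
  have hT := measurable_thresholdDecision hp τ
  have hgain := integral_mul_le_integral_thresholdDecision_mul hp hp01 hY hYI hmass
  have hdom := TPR_le_and_TNR_le_of_integral_eq hp hp01 hY hYI hT
    (thresholdDecision_mem_unitInterval p τ) hmass.symm hgain
  have hTPR := (hmax T hT (thresholdDecision_eq_zero_or_one p τ) hdom).1
  refine ⟨τ, hτ, ae_eq_thresholdDecision_of_integral_mul_le hp hp01 hY hYI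
    (ae_ne_of_map_singleton_eq_zero_s8 hp (hpAtomless τ)) hmass ?_⟩
  exact (div_le_div_iff_of_pos_right hppos).1 hTPR

/-- every Pareto maximal decision agrees `μ`-a.e. with a
threshold decision on `p`. -/
theorem pareto_maximal_is_threshold_decision
    {X : Type*} [MeasurableSpace X] (μ : Measure X) [IsProbabilityMeasure μ]
    (p : X → ℝ) (hp : Measurable p) (hp01 : ∀ x, p x ∈ Set.Icc (0 : ℝ) 1)
    (hppos : 0 < ∫ x, p x ∂μ) (hplt : (∫ x, p x ∂μ) < 1)
    (hpAtomless : ∀ c : ℝ, μ.map p {c} = 0)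
    (Y : X → ℝ) (hY : Measurable Y) (hY01 : ∀ x, Y x = 0 ∨ Y x = 1)
    (hmax : ∀ Y' : X → ℝ, Measurable Y' → (∀ x, Y' x = 0 ∨ Y' x = 1) →
      (TPR μ p Y' ≥ TPR μ p Y ∧ TNR μ p Y' ≥ TNR μ p Y) →
      (TPR μ p Y ≥ TPR μ p Y' ∧ TNR μ p Y ≥ TNR μ p Y')) :
    ∃ τ ∈ Set.Icc (0 : ℝ) 1,
      Y =ᵐ[μ] (fun x => if τ < p x then (1 : ℝ) else 0) :=
  pareto_maximal_is_threshold_decision_general μ p hp hp01 hppos hpAtomless Y hY hY01 hmax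
end
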